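/- Let T be a finite tree with deg(T) ≥ 2 and let 0 ≤ λ < 1/(√2·|E(T)|). Then F₁(T)(λ) − F₁(T)(0) = 0, i.e., the boundary map c₁(T) has no nonzero singular values ≤ λ. -/

import Mathlib

open scoped RealInnerProductSpace

variable {V E : Type*}

noncomputable def c1 [Fintype E] [DecidableEq V] (v0 v1 : E → V) :
    EuclideanSpace ℝ E →ₗ[ℝ] EuclideanSpace ℝ V where
  toFun a := WithLp.toLp 2 (fun v =>
    (∑ e ∈ Finset.univ.filter (fun e => v1 e = v), a e)
      - (∑ e ∈ Finset.univ.filter (fun e => v0 e = v), a e))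
  map_add' a b := by
    ext v
    simp [PiLp.add_apply, Finset.sum_add_distrib] <;>
    ring
  map_smul' c a := by
    ext v
    simp [PiLp.smul_apply, smul_eq_mul, ← Finset.mul_sum, mul_sub]

/-- Spectral density function of a linear map of inner product spaces. -/
noncomputable def sdf {V W : Type*} [NormedAddCommGroup V] [InnerProductSpace ℝ V]
    [NormedAddCommGroup W] [InnerProductSpace ℝ W]
    (f : V →ₗ[ℝ] W) (lam : ℝ) : ℕ :=
  sSup {n : ℕ | ∃ U : Submodule ℝ V, Module.finrank ℝ U = n ∧ ∀ v ∈ U, ‖f v‖ ≤ lam * ‖v‖}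

/-- Degree of a vertex in a finite directed multigraph (loops count twice). -/
def vdeg [Fintype E] [DecidableEq V] (v0 v1 : E → V) (v : V) : ℕ :=
  (Finset.univ.filter fun e => v0 e = v).card + (Finset.univ.filter fun e => v1 e = v).card

/-- Maximal vertex degree of a finite multigraph. -/
def maxDeg [Fintype V] [Fintype E] [DecidableEq V] (v0 v1 : E → V) : ℕ :=
  Finset.univ.sup (vdeg v0 v1)

/-- The simple graph underlying a directed multigraph. -/
def supportGraph (v0 v1 : E → V) : SimpleGraph V where
  Adj u w := u ≠ w ∧ ∃ e, (v0 e = u ∧ v1 e = w) ∨ (v0 e = w ∧ v1 e = u)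
  symm := by
    constructor
    rintro u w ⟨h, e, he⟩
    exact ⟨h.symm, e, he.symm⟩
  loopless := by constructor; rintro u ⟨h, _⟩; exact h rfl

/-!
Every edge `e` of a tree is a bridge: if `S` is the vertex set of the component of `T - e`
containing `v₀ e`, then summing `c₁ a` over `S` leaves only `-a e`. Hence
`|a e| ≤ ∑ᵥ |(c₁ a) v| ≤ √|V| ‖c₁ a‖`, so `‖a‖ ≤ √(|E| |V|) ‖c₁ a‖ ≤ √2 |E| ‖c₁ a‖`. When
`λ √2 |E| < 1` no nonzero vector satisfies `‖c₁ a‖ ≤ λ ‖a‖`, so both `F₁(λ)` and `F₁(0)` vanish.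
-/

open Finset

section SpectralDensity

variable {X Y : Type*} [NormedAddCommGroup X] [InnerProductSpace ℝ X]
  [NormedAddCommGroup Y] [InnerProductSpace ℝ Y]

lemma sdf_eq_zero_of_norm_le_mul_norm {f : X →ₗ[ℝ] Y} {C mu : ℝ} (hC : 0 ≤ C)
    (hf : ∀ v, ‖v‖ ≤ C * ‖f v‖) (hmu : mu * C < 1) : sdf f mu = 0 := by
  have eq_bot : ∀ U : Submodule ℝ X, (∀ v ∈ U, ‖f v‖ ≤ mu * ‖v‖) → U = ⊥ := by
    intro U hU
    refine (Submodule.eq_bot_iff U).mpr fun v hv => norm_le_zero_iff.mp ?_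
    have : ‖v‖ ≤ mu * C * ‖v‖ := calc
      ‖v‖ ≤ C * ‖f v‖ := hf v
      _ ≤ C * (mu * ‖v‖) := mul_le_mul_of_nonneg_left (hU v hv) hC
      _ = mu * C * ‖v‖ := by ring
    nlinarith [norm_nonneg v]
  refine Nat.le_zero.mp (csSup_le' ?_)
  rintro _ ⟨U, rfl, hU⟩
  rw [eq_bot U hU, finrank_bot]

end SpectralDensity

section Multigraph

variable (v0 v1 : E → V)

lemma supportGraph_edgeSet_subset_range :
    (supportGraph v0 v1).edgeSet ⊆ Set.range fun e => s(v0 e, v1 e) := by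
  intro z
  induction z using Sym2.ind with
  | _ u w =>
    rintro ⟨-, e, ⟨rfl, rfl⟩ | ⟨rfl, rfl⟩⟩
    · exact ⟨e, rfl⟩
    · exact ⟨e, Sym2.eq_swap⟩

lemma card_le_card_add_one_of_connected_supportGraph [Fintype V] [Fintype E]
    (hconn : (supportGraph v0 v1).Connected) : Fintype.card V ≤ Fintype.card E + 1 := by
  have hedges : Nat.card (supportGraph v0 v1).edgeSet ≤ Nat.card E :=
    (Nat.card_mono (Set.finite_range _) (supportGraph_edgeSet_subset_range v0 v1)).trans
      (Finite.card_range_le _)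
  simpa only [Nat.card_eq_fintype_card] using
    hconn.card_vert_le_card_edgeSet_add_one.trans (Nat.add_le_add_right hedges 1)

lemma connected_supportGraph_delete {v0 v1 : E → V} (hconn : (supportGraph v0 v1).Connected)
    {e : E} (he : (supportGraph (fun f : {f // f ≠ e} => v0 f) (fun f => v1 f)).Reachable
      (v0 e) (v1 e)) :
    (supportGraph (fun f : {f // f ≠ e} => v0 f) (fun f => v1 f)).Connected := by
  have := hconn.nonempty
  refine ⟨fun u w => ?_⟩
  rw [SimpleGraph.reachable_iff_reflTransGen]
  refine Relation.reflTransGen_closed ?_ u w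
    ((SimpleGraph.reachable_iff_reflTransGen u w).mp (hconn.preconnected u w))
  rintro x y ⟨hxy, f, hf⟩
  rw [← SimpleGraph.reachable_iff_reflTransGen]
  by_cases hfe : f = e
  · subst hfe
    rcases hf with ⟨rfl, rfl⟩ | ⟨rfl, rfl⟩
    exacts [he, he.symm]
  · exact SimpleGraph.Adj.reachable ⟨hxy, ⟨f, hfe⟩, hf⟩

lemma not_reachable_supportGraph_delete [Fintype V] [Fintype E]
    (hconn : (supportGraph v0 v1).Connected) (hcard : Fintype.card V = Fintype.card E + 1)
    (e : E) :
    ¬ (supportGraph (fun f : {f // f ≠ e} => v0 f) (fun f => v1 f)).Reachable (v0 e) (v1 e) := by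
  classical
  -- otherwise `T - e` would be connected, with `|E| + 1` vertices but only `|E| - 1` edges
  intro he
  have hle := card_le_card_add_one_of_connected_supportGraph _ _
    (connected_supportGraph_delete hconn he)
  have hE : 0 < Fintype.card E := Fintype.card_pos_iff.mpr ⟨e⟩
  simp only [Fintype.card_subtype_compl, Fintype.card_unique] at hle
  omega

lemma exists_cut_of_tree [Fintype V] [Fintype E] (hconn : (supportGraph v0 v1).Connected)
    (hcard : Fintype.card V = Fintype.card E + 1) (e : E) :
    ∃ S : Finset V, v0 e ∈ S ∧ v1 e ∉ S ∧ ∀ f, f ≠ e → (v0 f ∈ S ↔ v1 f ∈ S) := by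
  classical
  set G := supportGraph (fun f : {f // f ≠ e} => v0 f) (fun f => v1 f)
  have hcut := not_reachable_supportGraph_delete v0 v1 hconn hcard e
  refine ⟨univ.filter (G.Reachable (v0 e)), by simp, by simpa using hcut, fun f hf => ?_⟩
  by_cases hloop : v0 f = v1 f
  · rw [hloop]
  · have hadj : G.Adj (v0 f) (v1 f) := ⟨hloop, ⟨f, hf⟩, Or.inl ⟨rfl, rfl⟩⟩
    simpa using ⟨fun h => h.trans hadj.reachable, fun h => h.trans hadj.symm.reachable⟩

end Multigraph

section BoundaryMap

variable [Fintype E] [DecidableEq V] (v0 v1 : E → V)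

lemma sum_c1_apply (a : EuclideanSpace ℝ E) (S : Finset V) :
    ∑ v ∈ S, c1 v0 v1 a v =
      ∑ f, ((if v1 f ∈ S then a f else 0) - if v0 f ∈ S then a f else 0) := by
  change ∑ v ∈ S, ((∑ f ∈ univ.filter (v1 · = v), a f) - ∑ f ∈ univ.filter (v0 · = v), a f) = _
  rw [sum_sub_distrib, sum_fiberwise_eq_sum_filter, sum_fiberwise_eq_sum_filter, sum_filter,
    sum_filter, ← sum_sub_distrib]

lemma sum_c1_apply_of_cut (a : EuclideanSpace ℝ E) {S : Finset V} {e : E} (h0 : v0 e ∈ S)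
    (h1 : v1 e ∉ S) (hcut : ∀ f, f ≠ e → (v0 f ∈ S ↔ v1 f ∈ S)) :
    ∑ v ∈ S, c1 v0 v1 a v = -a e := by
  rw [sum_c1_apply, sum_eq_single e]
  · simp [h0, h1]
  · intro f _ hf
    simp only [hcut f hf, sub_self]
  · simp

variable [Fintype V]

lemma sq_apply_le_card_mul_norm_c1_sq (hconn : (supportGraph v0 v1).Connected)
    (hcard : Fintype.card V = Fintype.card E + 1) (a : EuclideanSpace ℝ E) (e : E) :
    a e ^ 2 ≤ Fintype.card V * ‖c1 v0 v1 a‖ ^ 2 := by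
  obtain ⟨S, h0, h1, hcut⟩ := exists_cut_of_tree v0 v1 hconn hcard e
  have habs : |a e| ≤ ∑ v, |c1 v0 v1 a v| := calc
    |a e| = |∑ v ∈ S, c1 v0 v1 a v| := by rw [sum_c1_apply_of_cut v0 v1 a h0 h1 hcut, abs_neg]
    _ ≤ ∑ v ∈ S, |c1 v0 v1 a v| := abs_sum_le_sum_abs _ _
    _ ≤ ∑ v, |c1 v0 v1 a v| :=
      sum_le_sum_of_subset_of_nonneg (subset_univ S) fun _ _ _ => abs_nonneg _
  calc a e ^ 2 = |a e| ^ 2 := (sq_abs _).symm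
    _ ≤ (∑ v, |c1 v0 v1 a v|) ^ 2 := pow_le_pow_left₀ (abs_nonneg _) habs 2
    _ ≤ #univ * ∑ v, |c1 v0 v1 a v| ^ 2 := sq_sum_le_card_mul_sum_sq
    _ = Fintype.card V * ‖c1 v0 v1 a‖ ^ 2 := by
      simp only [card_univ, sq_abs, EuclideanSpace.real_norm_sq_eq]

lemma norm_le_sqrt_two_mul_card_mul_norm_c1 (hconn : (supportGraph v0 v1).Connected)
    (hcard : Fintype.card V = Fintype.card E + 1) (a : EuclideanSpace ℝ E) :
    ‖a‖ ≤ √2 * Fintype.card E * ‖c1 v0 v1 a‖ := by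
  have hEV : Fintype.card E * Fintype.card V ≤ 2 * Fintype.card E ^ 2 := by
    rw [hcard]
    nlinarith [Nat.le_self_pow two_ne_zero (Fintype.card E)]
  rw [← pow_le_pow_iff_left₀ (norm_nonneg a) (by positivity) two_ne_zero]
  calc ‖a‖ ^ 2 = ∑ e, a e ^ 2 := EuclideanSpace.real_norm_sq_eq a
    _ ≤ ∑ _e : E, Fintype.card V * ‖c1 v0 v1 a‖ ^ 2 :=
      sum_le_sum fun e _ => sq_apply_le_card_mul_norm_c1_sq v0 v1 hconn hcard a e
    _ = Fintype.card E * Fintype.card V * ‖c1 v0 v1 a‖ ^ 2 := by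
      rw [sum_const, card_univ, nsmul_eq_mul, mul_assoc]
    _ ≤ 2 * Fintype.card E ^ 2 * ‖c1 v0 v1 a‖ ^ 2 :=
      mul_le_mul_of_nonneg_right (by exact_mod_cast hEV) (sq_nonneg _)
    _ = (√2 * Fintype.card E * ‖c1 v0 v1 a‖) ^ 2 := by
      rw [mul_pow, mul_pow, Real.sq_sqrt zero_le_two]

end BoundaryMap

theorem tree_sdf_small_lambda_general {V E : Type*} [Fintype V] [Fintype E] [DecidableEq V]
    (v0 v1 : E → V) (hconn : (supportGraph v0 v1).Connected)
    (hcard : Fintype.card V = Fintype.card E + 1)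
    (lam : ℝ)
    (h1 : lam < 1 / (Real.sqrt 2 * (Fintype.card E : ℝ))) :
    sdf (c1 v0 v1) lam = sdf (c1 v0 v1) 0 := by
  set C := Real.sqrt 2 * (Fintype.card E : ℝ)
  have hC : 0 ≤ C := by positivity
  have hbound : ∀ a, ‖a‖ ≤ C * ‖c1 v0 v1 a‖ :=
    norm_le_sqrt_two_mul_card_mul_norm_c1 v0 v1 hconn hcard
  have hlam : lam * C < 1 := by
    rcases hC.eq_or_lt with hC0 | hCpos
    · simp [← hC0]
    · rwa [← lt_div_iff₀ hCpos]
  rw [sdf_eq_zero_of_norm_le_mul_norm hC hbound hlam,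
    sdf_eq_zero_of_norm_le_mul_norm hC hbound (by simp)]

/-- For a finite tree T with deg(T) ≥ 2 and 0 ≤ λ < 1/(√2·|E(T)|),
the first spectral density function satisfies F₁(T)(λ) − F₁(T)(0) = 0. -/
theorem tree_sdf_small_lambda {V E : Type*} [Fintype V] [Fintype E] [DecidableEq V]
    (v0 v1 : E → V) (hconn : (supportGraph v0 v1).Connected)
    (hcard : Fintype.card V = Fintype.card E + 1)
    (hdeg : 2 ≤ maxDeg v0 v1) (lam : ℝ) (h0 : 0 ≤ lam)
    (h1 : lam < 1 / (Real.sqrt 2 * (Fintype.card E : ℝ))) :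
    sdf (c1 v0 v1) lam = sdf (c1 v0 v1) 0 :=
  tree_sdf_small_lambda_general v0 v1 hconn hcard lam h1
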